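/- arXiv:1812.00365 — 3 statements merged into one kernel-verified Lean document; each statement's English description precedes it below -/
import Mathlib

section
/- Let d ≥ 1, θ* ∈ ℝ^d, and let W₀ ∈ ℝ^{d×d} be symmetric positive definite. On a probability space (Ω, F, P), let (η_i)_{i≥1} be i.i.d. real random variables with E[η_i] = 0 and E[η_i²] = σ², and let F_s = σ(η₁,…,η_s). Fix l ≥ 1 and set t = l·d. Suppose the actions x₁,…,x_t ∈ ℝ^d are random vectors such that, for every batch k ∈ {1,…,l}, the d vectors x_{(k−1)d+1},…,x_{kd} almost surely form an orthonormal basis of ℝ^d and each of them is F_{(k−1)d}-measurable. Let X_t ∈ ℝ^{t×d} have rows x₁,…,x_t, let Y_t = X_t θ* + (η₁,…,η_t)ᵀ, let W_t = W₀ + X_tᵀX_t, and let θ̂_t = W_t⁻¹X_tᵀY_t. Then E[‖θ̂_t − θ*‖₂²] ≤ (d²/t²)·θ*ᵀW₀²θ* + (d²/t)·σ². In particular E[‖θ̂_t − θ*‖₂²] ≤ (d²/t)σ²(1+o(1)) as t → ∞. -/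
open MeasureTheory ProbabilityTheory Matrix

/-!
Orthonormality of every batch makes the Gram matrix deterministic, `X_tᵀ X_t = l • 1`, so with
`W = W₀ + l • 1` the error is `θ̂_t - θ* = ∑ᵢ ηᵢ • W⁻¹xᵢ - W⁻¹W₀θ*`. The action `xᵢ` only depends on
the noise before round `i`, which is independent of `ηᵢ`; hence in `E‖θ̂_t - θ*‖²` the cross terms
`E[ηᵢ ηⱼ ⟪W⁻¹xᵢ, W⁻¹xⱼ⟫]` (`i ≠ j`) and `E[ηᵢ ⟪W⁻¹xᵢ, W⁻¹W₀θ*⟫]` vanish, while the diagonal terms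
are `σ² E‖W⁻¹xᵢ‖²`. As `W ≥ l • 1`, `‖W⁻¹v‖ ≤ ‖v‖ / l`, hence
`E‖θ̂_t - θ*‖² ≤ σ² t / l² + ‖W₀θ*‖² / l²`, which is the claim for `t = l d`.
-/

theorem Nat.exists_mul_add_eq_of_lt_mul {i l d : ℕ} (h : i < l * d) :
    ∃ k < l, ∃ j < d, k * d + j = i :=
  ⟨i / d, Nat.div_lt_of_lt_mul (by rwa [mul_comm]), i % d,
    Nat.mod_lt _ (Nat.pos_of_mul_pos_left (by omega : 0 < l * d)), Nat.div_add_mod' i d⟩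

theorem Finset.sum_range_mul_eq_sum_sum {M : Type*} [AddCommMonoid M] (f : ℕ → M) (l d : ℕ) :
    ∑ i ∈ range (l * d), f i = ∑ k ∈ range l, ∑ j ∈ range d, f (k * d + j) := by
  induction l with
  | zero => simp
  | succ l ih => rw [Nat.succ_mul, sum_range_add, ih, sum_range_succ]

theorem norm_sum_smul_sub_sq {E ι : Type*} [NormedAddCommGroup E] [InnerProductSpace ℝ E]
    (s : Finset ι) (a : ι → ℝ) (v : ι → E) (b : E) :
    ‖∑ i ∈ s, a i • v i - b‖ ^ 2 = ∑ i ∈ s, ∑ j ∈ s, a i * a j * inner ℝ (v i) (v j)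
      - 2 * ∑ i ∈ s, a i * inner ℝ (v i) b + ‖b‖ ^ 2 := by
  rw [norm_sub_sq_real, ← real_inner_self_eq_norm_sq, sum_inner, sum_inner]
  simp only [inner_sum, inner_smul_left, inner_smul_right, Finset.mul_sum, conj_trivial, mul_assoc,
    mul_left_comm]

namespace Matrix

section

variable {n : Type*} [Fintype n]

theorem dotProduct_self_eq_norm_toLp_sq (w : n → ℝ) : w ⬝ᵥ w = ‖WithLp.toLp 2 w‖ ^ 2 := by
  rw [← real_inner_self_eq_norm_sq, EuclideanSpace.inner_toLp_toLp, star_trivial]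

theorem IsSymm.mulVec_dotProduct_mulVec {α : Type*} [CommSemiring α] {A : Matrix n n α}
    (hA : A.IsSymm) (v : n → α) : (A *ᵥ v) ⬝ᵥ (A *ᵥ v) = v ⬝ᵥ ((A * A) *ᵥ v) := by
  rw [← mulVec_mulVec, dotProduct_mulVec, ← mulVec_transpose, hA.eq, dotProduct_comm]

variable [DecidableEq n]

theorem PosSemidef.isUnit_det_add_smul_one {W₀ : Matrix n n ℝ} (hW₀ : W₀.PosSemidef) {c : ℝ}
    (hc : 0 < c) : IsUnit (W₀ + c • 1).det :=
  (PosDef.posSemidef_add hW₀ (PosDef.one.smul hc)).det_pos.ne'.isUnit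

theorem norm_toLp_inv_add_smul_one_mulVec_le {W₀ : Matrix n n ℝ} (hW₀ : W₀.PosSemidef) {c : ℝ}
    (hc : 0 < c) (v : n → ℝ) :
    ‖WithLp.toLp 2 ((W₀ + c • 1)⁻¹ *ᵥ v)‖ ≤ c⁻¹ * ‖WithLp.toLp 2 v‖ := by
  have hW := hW₀.isUnit_det_add_smul_one hc
  set u := (W₀ + c • 1)⁻¹ *ᵥ v
  have hu : (W₀ + c • 1) *ᵥ u = v := by rw [mulVec_mulVec, mul_nonsing_inv _ hW, one_mulVec]
  have key : c * ‖WithLp.toLp 2 u‖ ^ 2 ≤ ‖WithLp.toLp 2 u‖ * ‖WithLp.toLp 2 v‖ := calc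
    c * ‖WithLp.toLp 2 u‖ ^ 2 ≤ u ⬝ᵥ (W₀ *ᵥ u) + c * (u ⬝ᵥ u) := by
      have := hW₀.dotProduct_mulVec_nonneg u
      rw [star_trivial] at this
      rw [dotProduct_self_eq_norm_toLp_sq]
      linarith
    _ = inner ℝ (WithLp.toLp 2 u) (WithLp.toLp 2 v) := by
      rw [EuclideanSpace.inner_toLp_toLp, star_trivial, ← hu, add_mulVec, add_dotProduct,
        smul_mulVec, one_mulVec, smul_dotProduct, smul_eq_mul, dotProduct_comm (W₀ *ᵥ u)]
    _ ≤ _ := real_inner_le_norm _ _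
  rw [le_inv_mul_iff₀ hc]
  rcases (norm_nonneg (WithLp.toLp 2 u)).eq_or_lt with h0 | hpos
  · rw [← h0, mul_zero]
    exact norm_nonneg _
  · exact le_of_mul_le_mul_left (by linarith) hpos

theorem inv_mulVec_transpose_mulVec_sub {m : Type*} [Fintype m] (A : Matrix m n ℝ)
    (W₀ : Matrix n n ℝ) (θ : n → ℝ) (e : m → ℝ) (hW : IsUnit (W₀ + Aᵀ * A).det) :
    (W₀ + Aᵀ * A)⁻¹ *ᵥ (Aᵀ *ᵥ (A *ᵥ θ + e)) - θ = (W₀ + Aᵀ * A)⁻¹ *ᵥ (Aᵀ *ᵥ e - W₀ *ᵥ θ) := by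
  have hθ : (W₀ + Aᵀ * A)⁻¹ *ᵥ ((W₀ + Aᵀ * A) *ᵥ θ) = θ := by
    rw [mulVec_mulVec, nonsing_inv_mul _ hW, one_mulVec]
  have : Aᵀ *ᵥ e - W₀ *ᵥ θ = Aᵀ *ᵥ (A *ᵥ θ + e) - (W₀ + Aᵀ * A) *ᵥ θ := by
    rw [add_mulVec, mulVec_add, mulVec_mulVec]
    abel
  rw [this, mulVec_sub, hθ]

end

abbrev designMatrix {d : ℕ} (n : ℕ) (y : ℕ → Fin d → ℝ) : Matrix (Fin n) (Fin d) ℝ :=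
  of fun i a => y i a

def OrthonormalBatches (l d : ℕ) (y : ℕ → Fin d → ℝ) : Prop :=
  ∀ k < l, ∀ j < d, ∀ j' < d, y (k * d + j) ⬝ᵥ y (k * d + j') = if j = j' then 1 else 0

theorem designMatrix_transpose_mulVec {n d : ℕ} (y : ℕ → Fin d → ℝ) (e : ℕ → ℝ) :
    (designMatrix n y)ᵀ *ᵥ (fun i : Fin n => e i) = ∑ i ∈ Finset.range n, e i • y i := by
  rw [mulVec_transpose, vecMul_eq_sum, ← Fin.sum_univ_eq_sum_range (fun i => e i • y i)]
  rfl

theorem OrthonormalBatches.norm_toLp_eq_one {d l : ℕ} {y : ℕ → Fin d → ℝ}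
    (h : OrthonormalBatches l d y) {i : ℕ} (hi : i < l * d) : ‖WithLp.toLp 2 (y i)‖ = 1 := by
  obtain ⟨k, hk, j, hj, rfl⟩ := Nat.exists_mul_add_eq_of_lt_mul hi
  rw [← pow_eq_one_iff_of_nonneg (norm_nonneg _) two_ne_zero, ← dotProduct_self_eq_norm_toLp_sq,
    h k hk j hj j hj, if_pos rfl]

theorem OrthonormalBatches.transpose_mul_self {d l : ℕ} {y : ℕ → Fin d → ℝ}
    (h : OrthonormalBatches l d y) :
    (designMatrix (l * d) y)ᵀ * designMatrix (l * d) y = (l : ℝ) • 1 := by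
  have hbatch : ∀ k < l, ∀ a b : Fin d, ∑ j ∈ Finset.range d, y (k * d + j) a * y (k * d + j) b =
      (1 : Matrix (Fin d) (Fin d) ℝ) a b := by
    intro k hk a b
    set B : Matrix (Fin d) (Fin d) ℝ := of fun j a => y (k * d + j) a
    have hrows : B * Bᵀ = 1 := by
      ext j j'
      simpa [B, mul_apply, one_apply, dotProduct, Fin.ext_iff] using h k hk j j.2 j' j'.2
    rw [← mul_eq_one_comm.mp hrows, mul_apply,
      ← Fin.sum_univ_eq_sum_range (fun j => y (k * d + j) a * y (k * d + j) b)]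
    rfl
  ext a b
  simp only [designMatrix, mul_apply, transpose_apply, of_apply]
  rw [Fin.sum_univ_eq_sum_range (fun i => y i a * y i b), Finset.sum_range_mul_eq_sum_sum,
    Finset.sum_congr rfl fun k hk => hbatch k (Finset.mem_range.mp hk) a b]
  simp

theorem OrthonormalBatches.inv_mulVec_sub {d l : ℕ} {y : ℕ → Fin d → ℝ}
    (h : OrthonormalBatches l d y) (W₀ : Matrix (Fin d) (Fin d) ℝ)
    (hW : IsUnit (W₀ + (l : ℝ) • 1).det) (θ : Fin d → ℝ) (e : ℕ → ℝ) :
    (W₀ + (designMatrix (l * d) y)ᵀ * designMatrix (l * d) y)⁻¹ *ᵥ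
        ((designMatrix (l * d) y)ᵀ *ᵥ (designMatrix (l * d) y *ᵥ θ + fun i : Fin (l * d) => e i))
        - θ =
      ∑ i ∈ Finset.range (l * d), e i • ((W₀ + (l : ℝ) • 1)⁻¹ *ᵥ y i) -
        (W₀ + (l : ℝ) • 1)⁻¹ *ᵥ (W₀ *ᵥ θ) := by
  rw [inv_mulVec_transpose_mulVec_sub _ _ _ _ (by rwa [h.transpose_mul_self]), h.transpose_mul_self,
    designMatrix_transpose_mulVec, mulVec_sub, mulVec_sum]
  simp only [mulVec_smul]

end Matrix

namespace ProbabilityTheory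

section Past

variable {Ω β : Type*} [MeasurableSpace β]

/-- `σ(η₀, …, ηₙ₋₁)`: rounds are numbered from `0`, so this is the paper's `F_n = σ(η₁, …, ηₙ)`. -/
abbrev pastMeasurableSpace (η : ℕ → Ω → β) (n : ℕ) : MeasurableSpace Ω :=
  ⨆ i < n, MeasurableSpace.comap (η i) inferInstance

variable {η : ℕ → Ω → β}

theorem pastMeasurableSpace_le [MeasurableSpace Ω] (hη : ∀ i, Measurable (η i)) (n : ℕ) :
    pastMeasurableSpace η n ≤ ‹MeasurableSpace Ω› :=
  iSup₂_le fun i _ => (hη i).comap_le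

theorem pastMeasurableSpace_mono : Monotone (pastMeasurableSpace η) :=
  fun _ _ hmn => biSup_mono fun _ hi => hi.trans_le hmn

theorem measurable_pastMeasurableSpace {m n : ℕ} (h : m < n) :
    Measurable[pastMeasurableSpace η n] (η m) :=
  (comap_measurable (η m)).mono (le_iSup₂_of_le m h le_rfl) le_rfl

theorem comap_pi_le_pastMeasurableSpace (n : ℕ) :
    MeasurableSpace.comap (fun ω (i : Fin n) => η i ω) inferInstance ≤ pastMeasurableSpace η n := by
  rw [MeasurableSpace.pi, MeasurableSpace.comap_iSup]
  refine iSup_le fun i => ?_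
  rw [MeasurableSpace.comap_comp]
  exact le_iSup₂_of_le (i : ℕ) i.2 le_rfl

theorem measurable_pastMeasurableSpace_of_batches {γ : Type*} [MeasurableSpace γ] {l d : ℕ}
    {x : ℕ → Ω → γ} (hx : ∀ k < l, ∀ j < d, Measurable[MeasurableSpace.comap
      (fun ω (i : Fin (k * d)) => η i ω) inferInstance] (x (k * d + j)))
    {i : ℕ} (hi : i < l * d) : Measurable[pastMeasurableSpace η i] (x i) := by
  obtain ⟨k, hk, j, hj, rfl⟩ := Nat.exists_mul_add_eq_of_lt_mul hi
  exact (hx k hk j hj).mono ((comap_pi_le_pastMeasurableSpace _).trans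
    (pastMeasurableSpace_mono (Nat.le_add_right _ _))) le_rfl

theorem indepFun_of_measurable_pastMeasurableSpace [MeasurableSpace Ω] {γ : Type*}
    [MeasurableSpace γ] {P : Measure Ω} (hη : ∀ i, Measurable (η i)) (hindep : iIndepFun η P)
    {n : ℕ} {Z : Ω → γ} (hZ : Measurable[pastMeasurableSpace η n] Z) : IndepFun Z (η n) P := by
  have h := indep_iSup_of_disjoint (fun i => (hη i).comap_le) hindep.iIndep
    (S := {i | i < n}) (T := {n}) (by simp)
  simp only [Set.mem_singleton_iff, iSup_iSup_eq_left] at h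
  exact indep_of_indep_of_le_left h hZ.comap_le

end Past

section Noise

variable {Ω E : Type*} [MeasurableSpace Ω] {P : Measure Ω}
  [NormedAddCommGroup E] [InnerProductSpace ℝ E] {η : ℕ → Ω → ℝ} {σ : ℝ} {u : ℕ → Ω → E}

theorem integral_mul_eq_zero_of_measurable_pastMeasurableSpace (hη : ∀ i, Measurable (η i))
    (hindep : iIndepFun η P) {n : ℕ} (hmean : ∫ ω, η n ω ∂P = 0) {Z : Ω → ℝ}
    (hZ : Measurable[pastMeasurableSpace η n] Z) : ∫ ω, Z ω * η n ω ∂P = 0 := by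
  rw [(indepFun_of_measurable_pastMeasurableSpace hη hindep hZ).integral_fun_mul_eq_mul_integral
    (hZ.mono (pastMeasurableSpace_le hη n) le_rfl).aestronglyMeasurable
    (hη n).aestronglyMeasurable, hmean, mul_zero]

theorem integral_mul_sq_eq_of_measurable_pastMeasurableSpace (hη : ∀ i, Measurable (η i))
    (hindep : iIndepFun η P) {n : ℕ} (hvar : ∫ ω, η n ω ^ 2 ∂P = σ ^ 2) {Z : Ω → ℝ}
    (hZ : Measurable[pastMeasurableSpace η n] Z) :
    ∫ ω, Z ω * η n ω ^ 2 ∂P = (∫ ω, Z ω ∂P) * σ ^ 2 := by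
  rw [← hvar]
  exact ((indepFun_of_measurable_pastMeasurableSpace hη hindep hZ).comp measurable_id
    (measurable_id.pow_const 2)).integral_fun_mul_eq_mul_integral
    (hZ.mono (pastMeasurableSpace_le hη n) le_rfl).aestronglyMeasurable
    ((hη n).pow_const 2).aestronglyMeasurable

theorem integral_mul_mul_inner_eq_zero_of_lt (hη : ∀ i, Measurable (η i)) (hindep : iIndepFun η P)
    (hmean : ∀ i, ∫ ω, η i ω ∂P = 0) {i j : ℕ} (hij : i < j)
    (hi : StronglyMeasurable[pastMeasurableSpace η i] (u i))
    (hj : StronglyMeasurable[pastMeasurableSpace η j] (u j)) :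
    ∫ ω, η i ω * η j ω * inner ℝ (u i ω) (u j ω) ∂P = 0 := by
  have hZ : Measurable[pastMeasurableSpace η j] fun ω => η i ω * inner ℝ (u i ω) (u j ω) :=
    (measurable_pastMeasurableSpace hij).mul
      ((hi.mono (pastMeasurableSpace_mono hij.le)).inner hj).measurable
  rw [← integral_mul_eq_zero_of_measurable_pastMeasurableSpace hη hindep (hmean j) hZ]
  congr with ω
  ring

theorem integral_mul_mul_inner (hη : ∀ i, Measurable (η i)) (hindep : iIndepFun η P)
    (hmean : ∀ i, ∫ ω, η i ω ∂P = 0) (hvar : ∀ i, ∫ ω, η i ω ^ 2 ∂P = σ ^ 2) {i j : ℕ}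
    (hi : StronglyMeasurable[pastMeasurableSpace η i] (u i))
    (hj : StronglyMeasurable[pastMeasurableSpace η j] (u j)) :
    ∫ ω, η i ω * η j ω * inner ℝ (u i ω) (u j ω) ∂P =
      if i = j then σ ^ 2 * ∫ ω, ‖u i ω‖ ^ 2 ∂P else 0 := by
  rcases lt_trichotomy i j with hij | rfl | hji
  · rw [if_neg hij.ne, integral_mul_mul_inner_eq_zero_of_lt hη hindep hmean hij hi hj]
  · rw [if_pos rfl, mul_comm, ← integral_mul_sq_eq_of_measurable_pastMeasurableSpace hη hindep
      (hvar i) (hi.norm.measurable.pow_const 2)]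
    congr with ω
    rw [real_inner_self_eq_norm_sq]
    ring
  · rw [if_neg hji.ne', ← integral_mul_mul_inner_eq_zero_of_lt hη hindep hmean hji hj hi]
    congr with ω
    rw [real_inner_comm]
    ring

theorem integral_mul_inner_eq_zero (hη : ∀ i, Measurable (η i)) (hindep : iIndepFun η P)
    (hmean : ∀ i, ∫ ω, η i ω ∂P = 0) {i : ℕ}
    (hi : StronglyMeasurable[pastMeasurableSpace η i] (u i)) (b : E) :
    ∫ ω, η i ω * inner ℝ (u i ω) b ∂P = 0 := by
  rw [← integral_mul_eq_zero_of_measurable_pastMeasurableSpace hη hindep (hmean i)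
    (hi.inner stronglyMeasurable_const).measurable]
  congr with ω
  ring

theorem integrable_mul_mul_inner (hindep : iIndepFun η P) (hL1 : ∀ i, Integrable (η i) P)
    (hL2 : ∀ i, Integrable (fun ω => η i ω ^ 2) P) {v w : Ω → E} (hv : StronglyMeasurable v)
    (hw : StronglyMeasurable w) {C : ℝ} (hvC : ∀ᵐ ω ∂P, ‖v ω‖ ≤ C) (hwC : ∀ᵐ ω ∂P, ‖w ω‖ ≤ C)
    (i j : ℕ) : Integrable (fun ω => η i ω * η j ω * inner ℝ (v ω) (w ω)) P := by
  have hη2 : Integrable (fun ω => η i ω * η j ω) P := by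
    rcases eq_or_ne i j with rfl | hij
    · simpa only [sq] using hL2 i
    · exact (hindep.indepFun hij).integrable_mul (hL1 i) (hL1 j)
  refine (hη2.bdd_mul (c := C * C) (hv.inner hw).aestronglyMeasurable ?_).congr
    (.of_forall fun ω => mul_comm _ _)
  filter_upwards [hvC, hwC] with ω hvω hwω
  exact (norm_inner_le_norm _ _).trans
    (mul_le_mul hvω hwω (norm_nonneg _) ((norm_nonneg _).trans hvω))

theorem integrable_mul_inner {i : ℕ} (hL1 : Integrable (η i) P) {v : Ω → E}
    (hv : StronglyMeasurable v) {C : ℝ} (hvC : ∀ᵐ ω ∂P, ‖v ω‖ ≤ C) (b : E) :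
    Integrable (fun ω => η i ω * inner ℝ (v ω) b) P := by
  refine (hL1.bdd_mul (c := C * ‖b‖) (hv.inner stronglyMeasurable_const).aestronglyMeasurable
    ?_).congr (.of_forall fun ω => mul_comm _ _)
  filter_upwards [hvC] with ω hω
  exact (norm_inner_le_norm _ _).trans (mul_le_mul_of_nonneg_right hω (norm_nonneg _))

theorem integral_norm_sum_smul_sub_sq [IsProbabilityMeasure P] (hη : ∀ i, Measurable (η i))
    (hindep : iIndepFun η P) (hL1 : ∀ i, Integrable (η i) P)
    (hL2 : ∀ i, Integrable (fun ω => η i ω ^ 2) P) (hmean : ∀ i, ∫ ω, η i ω ∂P = 0)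
    (hvar : ∀ i, ∫ ω, η i ω ^ 2 ∂P = σ ^ 2) {n : ℕ}
    (hpred : ∀ i < n, StronglyMeasurable[pastMeasurableSpace η i] (u i)) {C : ℝ}
    (hbdd : ∀ i < n, ∀ᵐ ω ∂P, ‖u i ω‖ ≤ C) (b : E) :
    ∫ ω, ‖∑ i ∈ Finset.range n, η i ω • u i ω - b‖ ^ 2 ∂P =
      σ ^ 2 * ∑ i ∈ Finset.range n, ∫ ω, ‖u i ω‖ ^ 2 ∂P + ‖b‖ ^ 2 := by
  simp only [← Finset.mem_range] at hpred hbdd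
  have hsm : ∀ i ∈ Finset.range n, StronglyMeasurable (u i) := fun i hi =>
    (hpred i hi).mono (pastMeasurableSpace_le hη i)
  have hquad : ∀ i ∈ Finset.range n, ∀ j ∈ Finset.range n,
      Integrable (fun ω => η i ω * η j ω * inner ℝ (u i ω) (u j ω)) P := fun i hi j hj =>
    integrable_mul_mul_inner hindep hL1 hL2 (hsm i hi) (hsm j hj) (hbdd i hi) (hbdd j hj) i j
  have hlin : ∀ i ∈ Finset.range n, Integrable (fun ω => η i ω * inner ℝ (u i ω) b) P :=
    fun i hi => integrable_mul_inner (hL1 i) (hsm i hi) (hbdd i hi) b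
  have hQ := integrable_finsetSum _ fun i hi => integrable_finsetSum _ (hquad i hi)
  have hL := (integrable_finsetSum _ hlin).const_mul 2
  have hQint : ∫ ω, ∑ i ∈ Finset.range n, ∑ j ∈ Finset.range n,
      η i ω * η j ω * inner ℝ (u i ω) (u j ω) ∂P =
      σ ^ 2 * ∑ i ∈ Finset.range n, ∫ ω, ‖u i ω‖ ^ 2 ∂P := by
    rw [integral_finsetSum _ fun i hi => integrable_finsetSum _ (hquad i hi), Finset.mul_sum]
    refine Finset.sum_congr rfl fun i hi => ?_
    rw [integral_finsetSum _ (hquad i hi), Finset.sum_congr rfl fun j hj =>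
      integral_mul_mul_inner hη hindep hmean hvar (hpred i hi) (hpred j hj),
      Finset.sum_ite_eq, if_pos hi]
  have hLint : ∫ ω, 2 * ∑ i ∈ Finset.range n, η i ω * inner ℝ (u i ω) b ∂P = 0 := by
    rw [integral_const_mul, integral_finsetSum _ hlin, Finset.sum_eq_zero fun i hi =>
      integral_mul_inner_eq_zero hη hindep hmean (hpred i hi) b, mul_zero]
  simp_rw [norm_sum_smul_sub_sq]
  rw [integral_add _ (integrable_const _), integral_sub hQ hL, hQint, hLint,
    integral_const, probReal_univ, one_smul, sub_zero]
  exact hQ.sub hL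

theorem integral_norm_sum_smul_sub_sq_le [IsProbabilityMeasure P] (hη : ∀ i, Measurable (η i))
    (hindep : iIndepFun η P) (hL1 : ∀ i, Integrable (η i) P)
    (hL2 : ∀ i, Integrable (fun ω => η i ω ^ 2) P) (hmean : ∀ i, ∫ ω, η i ω ∂P = 0)
    (hvar : ∀ i, ∫ ω, η i ω ^ 2 ∂P = σ ^ 2) {n : ℕ}
    (hpred : ∀ i < n, StronglyMeasurable[pastMeasurableSpace η i] (u i)) {C : ℝ}
    (hbdd : ∀ i < n, ∀ᵐ ω ∂P, ‖u i ω‖ ≤ C) (b : E) :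
    ∫ ω, ‖∑ i ∈ Finset.range n, η i ω • u i ω - b‖ ^ 2 ∂P ≤ σ ^ 2 * (n * C ^ 2) + ‖b‖ ^ 2 := by
  rw [integral_norm_sum_smul_sub_sq hη hindep hL1 hL2 hmean hvar hpred hbdd]
  gcongr
  calc ∑ i ∈ Finset.range n, ∫ ω, ‖u i ω‖ ^ 2 ∂P ≤ ∑ i ∈ Finset.range n, C ^ 2 := by
        refine Finset.sum_le_sum fun i hi => ?_
        have hle : ∀ᵐ ω ∂P, ‖u i ω‖ ^ 2 ≤ C ^ 2 := by
          filter_upwards [hbdd i (Finset.mem_range.mp hi)] with ω hω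
          exact pow_le_pow_left₀ (norm_nonneg _) hω 2
        simpa using integral_mono_of_nonneg (.of_forall fun ω => by positivity)
          (integrable_const (C ^ 2)) hle
    _ = n * C ^ 2 := by simp

end Noise

end ProbabilityTheory

theorem stmt_1_general {d : ℕ} (hd : 1 ≤ d) {Ω : Type*} [MeasurableSpace Ω]
    (P : Measure Ω) [IsProbabilityMeasure P]
    (θstar : Fin d → ℝ)
    (W0 : Matrix (Fin d) (Fin d) ℝ) (hW0 : W0.PosDef)
    (σ : ℝ)
    (η : ℕ → Ω → ℝ) (hηmeas : ∀ i, Measurable (η i))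
    (hindep : iIndepFun η P)
    (hL1 : ∀ i, Integrable (η i) P)
    (hL2 : ∀ i, Integrable (fun ω => (η i ω) ^ 2) P)
    (hmean : ∀ i, ∫ ω, η i ω ∂P = 0)
    (hvar : ∀ i, ∫ ω, (η i ω) ^ 2 ∂P = σ ^ 2)
    (l : ℕ) (hl : 1 ≤ l)
    (x : ℕ → Ω → Fin d → ℝ)
    -- within every batch `k < l`, the `d` actions form an orthonormal basis of `ℝ^d` a.s.
    (horth : ∀ᵐ ω ∂P, ∀ k < l, ∀ j < d, ∀ j' < d,
      x (k * d + j) ω ⬝ᵥ x (k * d + j') ω = if j = j' then (1 : ℝ) else 0)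
    -- every action of batch `k` is measurable w.r.t. the σ-field generated by the noise
    -- of the previous batches, i.e. `F_{k·d} = σ(η₀, …, η_{k·d−1})`
    (hadapt : ∀ k < l, ∀ j < d, Measurable[MeasurableSpace.comap
      (fun ω => (fun i : Fin (k * d) => η (i : ℕ) ω)) inferInstance] (x (k * d + j)))
    (θhat : Ω → Fin d → ℝ)
    (hθhat : ∀ ω, θhat ω =
      (W0 + (Matrix.of fun (i : Fin (l * d)) j => x (i : ℕ) ω j)ᵀ
          * (Matrix.of fun (i : Fin (l * d)) j => x (i : ℕ) ω j))⁻¹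
        *ᵥ ((Matrix.of fun (i : Fin (l * d)) j => x (i : ℕ) ω j)ᵀ
          *ᵥ ((Matrix.of fun (i : Fin (l * d)) j => x (i : ℕ) ω j) *ᵥ θstar
              + fun i : Fin (l * d) => η (i : ℕ) ω))) :
    ∫ ω, (θhat ω - θstar) ⬝ᵥ (θhat ω - θstar) ∂P
      ≤ ((d : ℝ) ^ 2 / ((l * d : ℕ) : ℝ) ^ 2) * (θstar ⬝ᵥ ((W0 * W0) *ᵥ θstar))
        + ((d : ℝ) ^ 2 / ((l * d : ℕ) : ℝ)) * σ ^ 2 := by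
  have hlpos : (0 : ℝ) < l := by exact_mod_cast hl
  set W : Matrix (Fin d) (Fin d) ℝ := W0 + (l : ℝ) • 1
  set u : ℕ → Ω → EuclideanSpace ℝ (Fin d) := fun i ω => WithLp.toLp 2 (W⁻¹ *ᵥ x i ω)
  set b := WithLp.toLp 2 (W⁻¹ *ᵥ (W0 *ᵥ θstar))
  have herr : ∀ᵐ ω ∂P, (θhat ω - θstar) ⬝ᵥ (θhat ω - θstar) =
      ‖∑ i ∈ Finset.range (l * d), η i ω • u i ω - b‖ ^ 2 := by
    filter_upwards [horth] with ω hω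
    rw [hθhat ω, OrthonormalBatches.inv_mulVec_sub (y := fun i => x i ω) hω W0
      (hW0.posSemidef.isUnit_det_add_smul_one hlpos) θstar (fun i => η i ω),
      dotProduct_self_eq_norm_toLp_sq]
    simp only [WithLp.toLp_sub, WithLp.toLp_sum, WithLp.toLp_smul]
    rfl
  have hpred : ∀ i < l * d, StronglyMeasurable[pastMeasurableSpace η i] (u i) := fun i hi =>
    (by fun_prop : Continuous fun v => WithLp.toLp 2 (W⁻¹ *ᵥ v)).comp_stronglyMeasurable
      (measurable_pastMeasurableSpace_of_batches hadapt hi).stronglyMeasurable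
  have hbdd : ∀ i < l * d, ∀ᵐ ω ∂P, ‖u i ω‖ ≤ (l : ℝ)⁻¹ := fun i hi => by
    filter_upwards [horth] with ω hω
    simpa [OrthonormalBatches.norm_toLp_eq_one (y := fun i => x i ω) hω hi] using
      norm_toLp_inv_add_smul_one_mulVec_le hW0.posSemidef hlpos (x i ω)
  have hb : ‖b‖ ^ 2 ≤ (l : ℝ)⁻¹ ^ 2 * θstar ⬝ᵥ ((W0 * W0) *ᵥ θstar) := by
    rw [← (isHermitian_iff_isSymm.mp hW0.isHermitian).mulVec_dotProduct_mulVec,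
      dotProduct_self_eq_norm_toLp_sq, ← mul_pow]
    exact pow_le_pow_left₀ (norm_nonneg _)
      (norm_toLp_inv_add_smul_one_mulVec_le hW0.posSemidef hlpos _) 2
  rw [integral_congr_ae herr]
  calc _ ≤ σ ^ 2 * ((l * d : ℕ) * (l : ℝ)⁻¹ ^ 2) + ‖b‖ ^ 2 :=
        integral_norm_sum_smul_sub_sq_le hηmeas hindep hL1 hL2 hmean hvar hpred hbdd b
    _ ≤ σ ^ 2 * ((l * d : ℕ) * (l : ℝ)⁻¹ ^ 2) + (l : ℝ)⁻¹ ^ 2 * θstar ⬝ᵥ ((W0 * W0) *ᵥ θstar) := by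
        gcongr
    _ = _ := by
        push_cast
        field_simp
        ring

/-- For the batch algorithm playing, in each of the `l` consecutive
blocks of `d` rounds, an orthonormal basis of `ℝ^d` measurable with respect to the noise
observed before the block, the regularized least-squares estimator after `t = l·d` rounds
satisfies `E[‖θ̂_t − θ*‖₂²] ≤ (d²/t²)·θ*ᵀW₀²θ* + (d²/t)·σ²`. -/
theorem stmt_1 {d : ℕ} (hd : 1 ≤ d) {Ω : Type*} [MeasurableSpace Ω]
    (P : Measure Ω) [IsProbabilityMeasure P]
    (θstar : Fin d → ℝ)
    (W0 : Matrix (Fin d) (Fin d) ℝ) (hW0 : W0.PosDef)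
    (σ : ℝ)
    (η : ℕ → Ω → ℝ) (hηmeas : ∀ i, Measurable (η i))
    (hindep : iIndepFun η P)
    (hident : ∀ i, IdentDistrib (η i) (η 0) P P)
    (hL1 : ∀ i, Integrable (η i) P)
    (hL2 : ∀ i, Integrable (fun ω => (η i ω) ^ 2) P)
    (hmean : ∀ i, ∫ ω, η i ω ∂P = 0)
    (hvar : ∀ i, ∫ ω, (η i ω) ^ 2 ∂P = σ ^ 2)
    (l : ℕ) (hl : 1 ≤ l)
    (x : ℕ → Ω → Fin d → ℝ)
    -- within every batch `k < l`, the `d` actions form an orthonormal basis of `ℝ^d` a.s.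
    (horth : ∀ᵐ ω ∂P, ∀ k < l, ∀ j < d, ∀ j' < d,
      x (k * d + j) ω ⬝ᵥ x (k * d + j') ω = if j = j' then (1 : ℝ) else 0)
    -- every action of batch `k` is measurable w.r.t. the σ-field generated by the noise
    -- of the previous batches, i.e. `F_{k·d} = σ(η₀, …, η_{k·d−1})`
    (hadapt : ∀ k < l, ∀ j < d, Measurable[MeasurableSpace.comap
      (fun ω => (fun i : Fin (k * d) => η (i : ℕ) ω)) inferInstance] (x (k * d + j)))
    (θhat : Ω → Fin d → ℝ)
    (hθhat : ∀ ω, θhat ω =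
      (W0 + (Matrix.of fun (i : Fin (l * d)) j => x (i : ℕ) ω j)ᵀ
          * (Matrix.of fun (i : Fin (l * d)) j => x (i : ℕ) ω j))⁻¹
        *ᵥ ((Matrix.of fun (i : Fin (l * d)) j => x (i : ℕ) ω j)ᵀ
          *ᵥ ((Matrix.of fun (i : Fin (l * d)) j => x (i : ℕ) ω j) *ᵥ θstar
              + fun i : Fin (l * d) => η (i : ℕ) ω))) :
    ∫ ω, (θhat ω - θstar) ⬝ᵥ (θhat ω - θstar) ∂P
      ≤ ((d : ℝ) ^ 2 / ((l * d : ℕ) : ℝ) ^ 2) * (θstar ⬝ᵥ ((W0 * W0) *ᵥ θstar))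
        + ((d : ℝ) ^ 2 / ((l * d : ℕ) : ℝ)) * σ ^ 2 :=
  stmt_1_general hd P θstar W0 hW0 σ η hηmeas hindep hL1 hL2 hmean hvar l hl x horth hadapt θhat
    hθhat
end

section
/- Let H be a real inner product space, let v ∈ H with ‖v‖ = 1, and let (u_i)_{i≥1} be a sequence of vectors in H with ‖u_i‖ = 1 for all i. If lim_{n→∞} (1/n)·Σ_{i=1}^n ⟨v − u_i, v⟩ = 0, then lim_{n→∞} (1/n)·Σ_{i=1}^n ⟨u_i, v⟩·u_i = v in norm; equivalently, in ℝ^d this says that the Cesàro averages of the rank-one matrices u_i u_iᵀ applied to v converge to v: (1/n)·Σ_{i=1}^n (u_i u_iᵀ) v → v. -/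
open Filter RealInnerProductSpace

/-- Cesàro-mean lemma for unit vectors: if
`(1/n)·Σ_{i<n} ⟪v − uᵢ, v⟫ → 0` for unit vectors `v, uᵢ`, then
`(1/n)·Σ_{i<n} ⟪uᵢ, v⟫·uᵢ → v` in norm (i.e. `(1/n)·Σ (uᵢuᵢᵀ)v → v`). -/
theorem stmt_14 {H : Type*} [NormedAddCommGroup H] [InnerProductSpace ℝ H]
    (v : H) (hv : ‖v‖ = 1) (u : ℕ → H) (hu : ∀ i, ‖u i‖ = 1)
    (h : Tendsto (fun n : ℕ => (1 / (n : ℝ)) * ∑ i ∈ Finset.range n, ⟪v - u i, v⟫)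
      atTop (nhds 0)) :
    Tendsto (fun n : ℕ => (1 / (n : ℝ)) • ∑ i ∈ Finset.range n, ⟪u i, v⟫ • u i)
      atTop (nhds v) := by
  set c : ℕ → ℝ := fun i => ⟪u i, v⟫ with hc
  have hv2 : ⟪v, v⟫ = (1 : ℝ) := by rw [real_inner_self_eq_norm_sq, hv]; norm_num
  have hu2 : ∀ i, ⟪u i, u i⟫ = (1 : ℝ) := fun i => by
    rw [real_inner_self_eq_norm_sq, hu i]; norm_num
  have hci : ∀ i, c i ≤ 1 := fun i => by
    calc c i ≤ ‖u i‖ * ‖v‖ := real_inner_le_norm _ _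
    _ = 1 := by rw [hu i, hv]; ring
  have hrw : ∀ i, ⟪v - u i, v⟫ = 1 - c i := fun i => by
    rw [inner_sub_left, hv2]
  -- h rewritten
  have h' : Tendsto (fun n : ℕ => (1 / (n : ℝ)) * ∑ i ∈ Finset.range n, (1 - c i))
      atTop (nhds 0) := by
    simpa only [hrw] using h
  have hterm : ∀ i, ‖c i • u i - v‖ ≤ Real.sqrt (2 * (1 - c i)) := by
    intro i
    have hsq : ‖c i • u i - v‖ ^ 2 = 1 - c i ^ 2 := by
      rw [← real_inner_self_eq_norm_sq]
      simp only [inner_sub_left, inner_sub_right, real_inner_smul_left, real_inner_smul_right,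
        hv2, hu2 i]
      rw [real_inner_comm (u i) v] at *
      ring
    have hle : ‖c i • u i - v‖ ^ 2 ≤ 2 * (1 - c i) := by
      rw [hsq]; nlinarith [sq_nonneg (1 - c i)]
    calc ‖c i • u i - v‖ = Real.sqrt (‖c i • u i - v‖ ^ 2) :=
          (Real.sqrt_sq (norm_nonneg _)).symm
      _ ≤ Real.sqrt (2 * (1 - c i)) := Real.sqrt_le_sqrt hle
  rw [tendsto_iff_norm_sub_tendsto_zero]
  refine squeeze_zero' (Eventually.of_forall fun n => norm_nonneg _)
    (g := fun n : ℕ => Real.sqrt (2 * ((1 / (n : ℝ)) * ∑ i ∈ Finset.range n, (1 - c i)))) ?_ ?_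
  · filter_upwards [eventually_ge_atTop 1] with n hn
    have hn0 : (0 : ℝ) < n := by exact_mod_cast hn
    have h1 : (1 / (n : ℝ)) • ∑ i ∈ Finset.range n, c i • u i - v
        = (1 / (n : ℝ)) • ∑ i ∈ Finset.range n, (c i • u i - v) := by
      rw [Finset.sum_sub_distrib, smul_sub, Finset.sum_const, Finset.card_range,
        ← Nat.cast_smul_eq_nsmul ℝ, smul_smul, one_div_mul_cancel hn0.ne', one_smul]
    have step1 : ‖(1 / (n : ℝ)) • ∑ i ∈ Finset.range n, c i • u i - v‖
        ≤ (1 / (n : ℝ)) * ∑ i ∈ Finset.range n, Real.sqrt (2 * (1 - c i)) := by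
      rw [h1, norm_smul, Real.norm_eq_abs, abs_of_pos (by positivity)]
      gcongr
      exact (norm_sum_le _ _).trans (Finset.sum_le_sum fun i _ => hterm i)
    refine step1.trans ?_
    have hA0 : (0 : ℝ) ≤ ∑ i ∈ Finset.range n, Real.sqrt (2 * (1 - c i)) :=
      Finset.sum_nonneg fun i _ => Real.sqrt_nonneg _
    have step2 : ∑ i ∈ Finset.range n, Real.sqrt (2 * (1 - c i))
        ≤ Real.sqrt ((n : ℝ) * ∑ i ∈ Finset.range n, (2 * (1 - c i))) := by
      have hsq := sq_sum_le_card_mul_sum_sq (s := Finset.range n)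
        (f := fun i => Real.sqrt (2 * (1 - c i)))
      have hsq' : (∑ i ∈ Finset.range n, Real.sqrt (2 * (1 - c i))) ^ 2
          ≤ (n : ℝ) * ∑ i ∈ Finset.range n, (2 * (1 - c i)) := by
        refine hsq.trans_eq ?_
        rw [Finset.card_range]
        congr 1
        exact Finset.sum_congr rfl fun i _ => Real.sq_sqrt (by nlinarith [hci i])
      calc ∑ i ∈ Finset.range n, Real.sqrt (2 * (1 - c i))
          = Real.sqrt ((∑ i ∈ Finset.range n, Real.sqrt (2 * (1 - c i))) ^ 2) :=
            (Real.sqrt_sq hA0).symm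
        _ ≤ _ := Real.sqrt_le_sqrt hsq'
    calc (1 / (n : ℝ)) * ∑ i ∈ Finset.range n, Real.sqrt (2 * (1 - c i))
        ≤ (1 / (n : ℝ)) * Real.sqrt ((n : ℝ) * ∑ i ∈ Finset.range n, (2 * (1 - c i))) := by
          gcongr
      _ = Real.sqrt (2 * ((1 / (n : ℝ)) * ∑ i ∈ Finset.range n, (1 - c i))) := by
          rw [show 2 * ((1 / (n : ℝ)) * ∑ i ∈ Finset.range n, (1 - c i))
              = (1 / (n : ℝ)) ^ 2 * ((n : ℝ) * ∑ i ∈ Finset.range n, (2 * (1 - c i))) by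
            rw [← Finset.mul_sum]; field_simp]
          rw [Real.sqrt_mul (sq_nonneg _), Real.sqrt_sq (by positivity)]
  · have h2 : Tendsto (fun n : ℕ => 2 * ((1 / (n : ℝ)) * ∑ i ∈ Finset.range n, (1 - c i)))
        atTop (nhds 0) := by
      have := h'.const_mul 2
      rw [mul_zero] at this
      exact this
    have h3 := (Real.continuous_sqrt.tendsto 0).comp h2
    rw [Real.sqrt_zero] at h3
    exact h3
end

section
/- Let d ≥ 1, l ≥ 1, t = l·d, let W₀ ∈ ℝ^{d×d} be symmetric positive definite, let θ* ∈ ℝ^d and η ∈ ℝ^t, and let X ∈ ℝ^{t×d} satisfy XᵀX = l·I_d. With W = W₀ + XᵀX = W₀ + l·I_d, Y = Xθ* + η, and θ̂ = W⁻¹XᵀY, one has ‖θ̂ − θ*‖₂² ≤ (1/l²)·θ*ᵀW₀²θ* + (1/l²)·ηᵀXXᵀη + (2·λmax(W₀)·‖θ*‖₂/l²)·√(ηᵀXXᵀη), where λmax(W₀) is the largest eigenvalue of W₀. -/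
/-!
The error `e = θ̂ - θ*` solves `(W₀ + l·I) e = Xᵀη - W₀θ*`. Since `W₀ ⪰ 0`, expanding the square
gives `l² ‖e‖² ≤ ‖(W₀ + l·I) e‖²`, and the right-hand side is at most
`‖W₀θ*‖² + ‖Xᵀη‖² + 2 ‖W₀θ*‖ ‖Xᵀη‖` by Cauchy–Schwarz. Finally `‖W₀θ*‖² = θ*ᵀW₀²θ*`,
`‖Xᵀη‖² = ηᵀXXᵀη`, and `‖W₀θ*‖ ≤ λmax(W₀) ‖θ*‖` by diagonalising `W₀` in an orthonormal eigenbasis.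
-/

open Matrix

namespace Matrix

variable {m n : Type*} [Fintype m] [Fintype n]

theorem dotProduct_le_sqrt_mul_sqrt (u v : n → ℝ) : u ⬝ᵥ v ≤ √(u ⬝ᵥ u) * √(v ⬝ᵥ v) := by
  simpa only [dotProduct, sq] using Real.sum_mul_le_sqrt_mul_sqrt Finset.univ u v

theorem sub_dotProduct_sub_le (u v : n → ℝ) :
    (u - v) ⬝ᵥ (u - v) ≤ u ⬝ᵥ u + v ⬝ᵥ v + 2 * √(u ⬝ᵥ u) * √(v ⬝ᵥ v) := by
  have hcs := dotProduct_le_sqrt_mul_sqrt (-u) v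
  simp only [neg_dotProduct, dotProduct_neg, neg_neg] at hcs
  simp only [sub_dotProduct, dotProduct_sub, dotProduct_comm v u]
  linarith

theorem dotProduct_mul_transpose_mulVec {R : Type*} [CommSemiring R] (B : Matrix m n R)
    (x : m → R) : x ⬝ᵥ (B * Bᵀ) *ᵥ x = (Bᵀ *ᵥ x) ⬝ᵥ (Bᵀ *ᵥ x) := by
  rw [← mulVec_mulVec, dotProduct_mulVec, ← mulVec_transpose]

theorem mulVec_dotProduct_mulVec_of_mem_unitaryGroup [DecidableEq n] {U : Matrix n n ℝ}
    (hU : U ∈ unitaryGroup n ℝ) (x : n → ℝ) : (U *ᵥ x) ⬝ᵥ (U *ᵥ x) = x ⬝ᵥ x := by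
  rw [dotProduct_mulVec, ← mulVec_transpose, mulVec_mulVec, ← conjTranspose_eq_transpose_of_trivial,
    ← star_eq_conjTranspose, mem_unitaryGroup_iff'.mp hU, one_mulVec]

theorem diagonal_mulVec_dotProduct_le [DecidableEq n] {d : n → ℝ} {μ : ℝ}
    (hd : ∀ i, |d i| ≤ μ) (x : n → ℝ) :
    (diagonal d *ᵥ x) ⬝ᵥ (diagonal d *ᵥ x) ≤ μ ^ 2 * (x ⬝ᵥ x) := by
  simp only [dotProduct, mulVec_diagonal, Finset.mul_sum]
  refine Finset.sum_le_sum fun i _ => ?_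
  have : d i ^ 2 ≤ μ ^ 2 := sq_le_sq' (abs_le.mp (hd i)).1 (abs_le.mp (hd i)).2
  nlinarith [mul_self_nonneg (x i)]

theorem IsHermitian.mulVec_dotProduct_mulVec_le [DecidableEq n] {A : Matrix n n ℝ}
    (hA : A.IsHermitian) {μ : ℝ} (hμ : ∀ i, |hA.eigenvalues i| ≤ μ) (x : n → ℝ) :
    (A *ᵥ x) ⬝ᵥ (A *ᵥ x) ≤ μ ^ 2 * (x ⬝ᵥ x) := by
  obtain ⟨U, hU, hAU⟩ : ∃ U ∈ unitaryGroup n ℝ, A = U * diagonal hA.eigenvalues * star U :=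
    ⟨_, hA.eigenvectorUnitary.2, by simpa [RCLike.ofReal_real_eq_id] using hA.spectral_theorem⟩
  have hAx : A *ᵥ x = U *ᵥ (diagonal hA.eigenvalues *ᵥ (star U *ᵥ x)) := by
    conv_lhs => rw [hAU]
    rw [mulVec_mulVec, mulVec_mulVec, Matrix.mul_assoc]
  have hstarU : star U ∈ unitaryGroup n ℝ := Unitary.star_mem hU
  rw [hAx, mulVec_dotProduct_mulVec_of_mem_unitaryGroup hU,
    ← mulVec_dotProduct_mulVec_of_mem_unitaryGroup hstarU x]
  exact diagonal_mulVec_dotProduct_le hμ _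

theorem PosSemidef.sqrt_mulVec_dotProduct_mulVec_le [DecidableEq n] {A : Matrix n n ℝ}
    (hA : A.PosSemidef) (x : n → ℝ) :
    √((A *ᵥ x) ⬝ᵥ (A *ᵥ x)) ≤ (⨆ i, hA.1.eigenvalues i) * √(x ⬝ᵥ x) := by
  have hμ : 0 ≤ ⨆ i, hA.1.eigenvalues i := Real.iSup_nonneg hA.eigenvalues_nonneg
  have hle : ∀ i, |hA.1.eigenvalues i| ≤ ⨆ i, hA.1.eigenvalues i := fun i => by
    rw [abs_of_nonneg (hA.eigenvalues_nonneg i)]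
    exact le_ciSup (Set.finite_range _).bddAbove i
  calc √((A *ᵥ x) ⬝ᵥ (A *ᵥ x))
      ≤ √((⨆ i, hA.1.eigenvalues i) ^ 2 * (x ⬝ᵥ x)) :=
        Real.sqrt_le_sqrt (hA.1.mulVec_dotProduct_mulVec_le hle x)
    _ = (⨆ i, hA.1.eigenvalues i) * √(x ⬝ᵥ x) := by
        rw [Real.sqrt_mul (sq_nonneg _), Real.sqrt_sq hμ]

theorem PosSemidef.sq_mul_dotProduct_le [DecidableEq n] {A : Matrix n n ℝ} (hA : A.PosSemidef)
    {c : ℝ} (hc : 0 ≤ c) (x : n → ℝ) :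
    c ^ 2 * (x ⬝ᵥ x) ≤ ((A + c • 1) *ᵥ x) ⬝ᵥ ((A + c • 1) *ᵥ x) := by
  have hquad : 0 ≤ x ⬝ᵥ A *ᵥ x := by simpa using hA.dotProduct_mulVec_nonneg x
  have hsq : 0 ≤ (A *ᵥ x) ⬝ᵥ (A *ᵥ x) := Finset.sum_nonneg fun i _ => mul_self_nonneg _
  simp only [add_mulVec, smul_mulVec, one_mulVec, add_dotProduct, dotProduct_add,
    smul_dotProduct, dotProduct_smul, smul_eq_mul, dotProduct_comm (A *ᵥ x) x]
  nlinarith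

theorem mulVec_ridge_error {R : Type*} [CommRing R] [DecidableEq n] {W0 : Matrix n n R}
    {X : Matrix m n R} (hW : IsUnit (W0 + Xᵀ * X).det) (θ : n → R) (η : m → R) :
    (W0 + Xᵀ * X) *ᵥ ((W0 + Xᵀ * X)⁻¹ *ᵥ (Xᵀ *ᵥ (X *ᵥ θ + η)) - θ) = Xᵀ *ᵥ η - W0 *ᵥ θ := by
  rw [mulVec_sub, mulVec_mulVec, mul_nonsing_inv _ hW, one_mulVec, mulVec_add, mulVec_mulVec,
    add_mulVec]
  abel

end Matrix

theorem stmt_15_general {d l : ℕ} (hl : 1 ≤ l)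
    (W0 : Matrix (Fin d) (Fin d) ℝ) (hW0 : W0.PosDef)
    (θstar : Fin d → ℝ) (η : Fin (l * d) → ℝ)
    (X : Matrix (Fin (l * d)) (Fin d) ℝ)
    (hXX : Xᵀ * X = (l : ℝ) • (1 : Matrix (Fin d) (Fin d) ℝ))
    (W : Matrix (Fin d) (Fin d) ℝ) (hW : W = W0 + Xᵀ * X)
    (Y : Fin (l * d) → ℝ) (hY : Y = X *ᵥ θstar + η)
    (θhat : Fin d → ℝ) (hθhat : θhat = W⁻¹ *ᵥ (Xᵀ *ᵥ Y)) :
    (θhat - θstar) ⬝ᵥ (θhat - θstar)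
      ≤ (1 / (l : ℝ) ^ 2) * (θstar ⬝ᵥ ((W0 * W0) *ᵥ θstar))
        + (1 / (l : ℝ) ^ 2) * (η ⬝ᵥ ((X * Xᵀ) *ᵥ η))
        + (2 * (⨆ i, hW0.1.eigenvalues i) * Real.sqrt (θstar ⬝ᵥ θstar) / (l : ℝ) ^ 2)
          * Real.sqrt (η ⬝ᵥ ((X * Xᵀ) *ᵥ η)) := by
  have hl0 : (0 : ℝ) < l := by exact_mod_cast hl
  have hWdet : IsUnit (W0 + Xᵀ * X).det :=
    (hW0.add_posSemidef (posSemidef_conjTranspose_mul_self X)).det_pos.ne'.isUnit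
  have herr : (W0 + Xᵀ * X) *ᵥ (θhat - θstar) = Xᵀ *ᵥ η - W0 *ᵥ θstar := by
    rw [hθhat, hW, hY]
    exact mulVec_ridge_error hWdet θstar η
  rw [hXX] at herr
  have hnormal := hW0.posSemidef.sq_mul_dotProduct_le hl0.le (θhat - θstar)
  rw [herr] at hnormal
  have htriangle := sub_dotProduct_sub_le (Xᵀ *ᵥ η) (W0 *ᵥ θstar)
  have hspectral := hW0.posSemidef.sqrt_mulVec_dotProduct_mulVec_le θstar
  have hW0T : W0ᵀ = W0 := by rw [← conjTranspose_eq_transpose_of_trivial, hW0.1.eq]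
  rw [show W0 * W0 = W0 * W0ᵀ by rw [hW0T], dotProduct_mul_transpose_mulVec, hW0T,
    dotProduct_mul_transpose_mulVec]
  calc (θhat - θstar) ⬝ᵥ (θhat - θstar)
      = (l : ℝ) ^ 2 * ((θhat - θstar) ⬝ᵥ (θhat - θstar)) / (l : ℝ) ^ 2 := by
        field_simp
    _ ≤ ((W0 *ᵥ θstar) ⬝ᵥ (W0 *ᵥ θstar) + (Xᵀ *ᵥ η) ⬝ᵥ (Xᵀ *ᵥ η)
          + 2 * ((⨆ i, hW0.1.eigenvalues i) * √(θstar ⬝ᵥ θstar)) * √((Xᵀ *ᵥ η) ⬝ᵥ (Xᵀ *ᵥ η)))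
          / (l : ℝ) ^ 2 := by
        gcongr
        linarith [mul_le_mul_of_nonneg_left hspectral (Real.sqrt_nonneg ((Xᵀ *ᵥ η) ⬝ᵥ (Xᵀ *ᵥ η)))]
    _ = _ := by ring

/-- Deterministic error bound for the regularized least-squares
estimator when the design matrix satisfies `XᵀX = l·I` (l stacked orthonormal bases). -/
theorem stmt_15 {d l : ℕ} (hd : 1 ≤ d) (hl : 1 ≤ l)
    (W0 : Matrix (Fin d) (Fin d) ℝ) (hW0 : W0.PosDef)
    (θstar : Fin d → ℝ) (η : Fin (l * d) → ℝ)
    (X : Matrix (Fin (l * d)) (Fin d) ℝ)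
    (hXX : Xᵀ * X = (l : ℝ) • (1 : Matrix (Fin d) (Fin d) ℝ))
    (W : Matrix (Fin d) (Fin d) ℝ) (hW : W = W0 + Xᵀ * X)
    (Y : Fin (l * d) → ℝ) (hY : Y = X *ᵥ θstar + η)
    (θhat : Fin d → ℝ) (hθhat : θhat = W⁻¹ *ᵥ (Xᵀ *ᵥ Y)) :
    (θhat - θstar) ⬝ᵥ (θhat - θstar)
      ≤ (1 / (l : ℝ) ^ 2) * (θstar ⬝ᵥ ((W0 * W0) *ᵥ θstar))
        + (1 / (l : ℝ) ^ 2) * (η ⬝ᵥ ((X * Xᵀ) *ᵥ η))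
        + (2 * (⨆ i, hW0.1.eigenvalues i) * Real.sqrt (θstar ⬝ᵥ θstar) / (l : ℝ) ^ 2)
          * Real.sqrt (η ⬝ᵥ ((X * Xᵀ) *ᵥ η)) :=
  stmt_15_general hl W0 hW0 θstar η X hXX W hW Y hY θhat hθhat
end
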